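/- Let D be a category with pullbacks equipped with an orthogonal factorization system (E, M), let A be a category with a terminal object ⊤, and let G : A ⥤ D be a functor. Then the category whose objects are pairs (S, m) of a functor S : A ⥤ D and a cartesian natural transformation m : S ⟶ G with m_⊤ ∈ M (with morphisms the natural transformations over G) is equivalent to the M-slice category M/(G ⊤), the full subcategory of the slice category over G ⊤ on objects whose structure morphism lies in M. -/

import Mathlib

open CategoryTheory Limits

universe v u v' u'

/-- An orthogonal factorization system `(E, M)` on a category. -/
structure IsOFS {C : Type u} [Category.{v} C] (E M : MorphismProperty C) : Prop where
  isoE : ∀ {X Y : C} (f : X ⟶ Y), IsIso f → E f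
  isoM : ∀ {X Y : C} (f : X ⟶ Y), IsIso f → M f
  compE : ∀ {X Y Z : C} (f : X ⟶ Y) (g : Y ⟶ Z), E f → E g → E (f ≫ g)
  compM : ∀ {X Y Z : C} (f : X ⟶ Y) (g : Y ⟶ Z), M f → M g → M (f ≫ g)
  fac : ∀ {X Y : C} (f : X ⟶ Y), ∃ (Z : C) (e : X ⟶ Z) (m : Z ⟶ Y), E e ∧ M m ∧ e ≫ m = f
  orth : ∀ {X Y X' Y' : C} (e : X ⟶ Y) (m : X' ⟶ Y') (u : X ⟶ X') (v : Y ⟶ Y'),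
    E e → M m → u ≫ m = e ≫ v → ∃! d : Y ⟶ X', e ≫ d = u ∧ d ≫ m = v

/-- A natural transformation is cartesian when all its naturality squares are pullbacks. -/
def IsCartesianNT {A : Type u'} [Category.{v'} A] {D : Type u} [Category.{v} D]
    {F G : A ⥤ D} (τ : F ⟶ G) : Prop :=
  ∀ {X Y : A} (f : X ⟶ Y), IsPullback (F.map f) (τ.app X) (τ.app Y) (G.map f)

/-- The category of pairs `(S, m)` of a functor `S : A ⥤ D` and a cartesian natural
transformation `m : S ⟶ G` with `m_⊤ ∈ M`, with morphisms the natural transformations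
over `G`. -/
abbrev CartMSub {A : Type u'} [Category.{v'} A] [HasTerminal A]
    {D : Type u} [Category.{v} D] (M : MorphismProperty D) (G : A ⥤ D) :=
  ObjectProperty.FullSubcategory (fun f : Over G => IsCartesianNT f.hom ∧ M (f.hom.app (⊤_ A)))

/-- The `M`-slice category `M/T`. -/
abbrev MSlice {D : Type u} [Category.{v} D] (M : MorphismProperty D) (T : D) :=
  ObjectProperty.FullSubcategory (fun f : Over T => M f.hom)

/-!
Evaluation at the terminal object `⊤` is left adjoint to `Functor.const A`, with unit
`F a ⟶ F ⊤`. Passing to slices, evaluation `Over G ⥤ Over (G ⊤)` has as right adjoint the base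
change of a constant arrow along `G a ⟶ G ⊤`. The counit is invertible because `G ⊤ ⟶ G ⊤` is
the identity, so the right adjoint is fully faithful and the unit at `τ : S ⟶ G` is invertible
as soon as `τ` is the base change of `τ_⊤`, which is what cartesianness says on the squares over
`a ⟶ ⊤`. Base changes of constant arrows are cartesian, and `τ_⊤ ∈ M` is carried across the
counit since `M` is closed under isomorphisms.
-/

theorem IsOFS.respectsIso {C : Type*} [Category C] {E M : MorphismProperty C} (h : IsOFS E M) :
    M.RespectsIso :=
  .mk M (fun _ _ hf => h.compM _ _ (h.isoM _ inferInstance) hf)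
    (fun _ _ hf => h.compM _ _ hf (h.isoM _ inferInstance))

namespace CategoryTheory.Adjunction

variable {C C' : Type*} [Category C] [Category C'] {L : C ⥤ C'} {R : C' ⥤ C} (adj : L ⊣ R)
  {P : ObjectProperty C} {Q : ObjectProperty C'}

noncomputable def restrictEquivalence (hL : ∀ X, P X → Q (L.obj X))
    (hR : ∀ Y, Q Y → P (R.obj Y)) (hunit : ∀ X, P X → IsIso (adj.unit.app X))
    (hcounit : ∀ Y, Q Y → IsIso (adj.counit.app Y)) :
    P.FullSubcategory ≌ Q.FullSubcategory where
  functor := Q.lift (P.ι ⋙ L) fun X => hL _ X.2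
  inverse := P.lift (Q.ι ⋙ R) fun Y => hR _ Y.2
  unitIso := NatIso.ofComponents
    (fun X => P.isoMk (have := hunit _ X.2; asIso (adj.unit.app X.obj)))
    fun f => by ext; exact adj.unit.naturality f.hom
  counitIso := NatIso.ofComponents
    (fun Y => Q.isoMk (have := hcounit _ Y.2; asIso (adj.counit.app Y.obj)))
    fun f => by ext; exact adj.counit.naturality f.hom
  functor_unitIso_comp X := by ext; exact adj.left_triangle_components X.obj

end CategoryTheory.Adjunction

section

variable {A : Type u'} [Category.{v'} A] {D : Type u} [Category.{v} D]

@[simps! unit_app_app counit_app]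
def evaluationAdjConst {T : A} (hT : IsTerminal T) :
    (evaluation A D).obj T ⊣ Functor.const A :=
  Adjunction.mkOfUnitCounit
    { unit :=
        { app F :=
            { app a := F.map (hT.from a)
              naturality a b g := by simp [← F.map_comp] } }
      counit := (Functor.constCompEvaluationObj D T).hom }

theorem isPullback_iff_isPullback_app [HasPullbacks D] {F₁ F₂ F₃ F₄ : A ⥤ D}
    {fst : F₁ ⟶ F₂} {snd : F₁ ⟶ F₃} {f : F₂ ⟶ F₄} {g : F₃ ⟶ F₄} :
    IsPullback fst snd f g ↔ ∀ a, IsPullback (fst.app a) (snd.app a) (f.app a) (g.app a) := by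
  refine ⟨fun h a => h.map ((evaluation A D).obj a), fun h => ?_⟩
  have w : fst ≫ f = snd ≫ g := by ext a; exact (h a).w
  exact IsPullback.of_isLimit (c := PullbackCone.mk fst snd w) <|
    evaluationJointlyReflectsLimits _ fun a =>
      (isLimitMapConePullbackConeEquiv ((evaluation A D).obj a) w).symm (h a).isLimit

theorem IsCartesianNT.of_isPullback [HasPullbacks D] {F F' G G' : A ⥤ D} {α : F ⟶ F'}
    {τ : F ⟶ G} {τ' : F' ⟶ G'} {β : G ⟶ G'} (h : IsPullback α τ τ' β) (hτ' : IsCartesianNT τ') :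
    IsCartesianNT τ := by
  intro a b g
  have hpt := isPullback_iff_isPullback_app.1 h
  refine IsPullback.of_right ?_ (τ.naturality g) (hpt b)
  rw [α.naturality, β.naturality]
  exact (hpt a).paste_horiz (hτ' g)

theorem isCartesianNT_const_map {X Y : D} (f : X ⟶ Y) :
    IsCartesianNT ((Functor.const A).map f) := fun _ =>
  IsPullback.id_horiz f

theorem isCartesianNT_pullback_snd_const_map [HasPullbacks D] {X Y : D} {G : A ⥤ D} (f : X ⟶ Y)
    (β : G ⟶ (Functor.const A).obj Y) :
    IsCartesianNT (pullback.snd ((Functor.const A).map f) β) :=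
  IsCartesianNT.of_isPullback (.of_hasPullback _ _) (isCartesianNT_const_map f)

variable [HasPullbacks D] {T : A} (hT : IsTerminal T) (G : A ⥤ D)

theorem IsCartesianNT.isPullback_evaluationAdjConst_unit {F : A ⥤ D} {τ : F ⟶ G}
    (hτ : IsCartesianNT τ) :
    IsPullback ((evaluationAdjConst hT).unit.app F) τ ((Functor.const A).map (τ.app T))
      ((evaluationAdjConst hT).unit.app G) :=
  isPullback_iff_isPullback_app.2 fun a => hτ (hT.from a)

noncomputable abbrev overEvaluationAdj :
    Over.post (X := G) ((evaluation A D).obj T) ⊣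
      Over.post (Functor.const A) ⋙ Over.pullback ((evaluationAdjConst hT).unit.app G) :=
  Over.postAdjunctionLeft (evaluationAdjConst hT)

theorem isIso_overEvaluationAdj_counit_app (Y : Over (G.obj T)) :
    IsIso ((overEvaluationAdj hT G).counit.app Y) := by
  have : IsIso (((evaluationAdjConst hT).unit.app G).app T) := by
    rw [evaluationAdjConst_unit_app_app, hT.hom_ext (hT.from T) (𝟙 T), G.map_id]
    exact IsIso.id _
  have := (isPullback_iff_isPullback_app.1 (IsPullback.of_hasPullback
    ((Functor.const A).map Y.hom) ((evaluationAdjConst hT).unit.app G)) T).isIso_fst_of_isIso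
  refine (isIso_iff_of_reflects_iso _ (Over.forget _)).1 ?_
  simp only [Over.forget_map, Over.postAdjunctionLeft_counit_app_left, evaluation_obj_map,
    evaluationAdjConst_counit_app]
  exact IsIso.comp_isIso' this (IsIso.id _)

theorem isIso_overEvaluationAdj_unit_app {X : Over G} (hX : IsCartesianNT X.hom) :
    IsIso ((overEvaluationAdj hT G).unit.app X) := by
  have : IsIso (overEvaluationAdj hT G).counit :=
    (NatTrans.isIso_iff_isIso_app _).2 (isIso_overEvaluationAdj_counit_app hT G)
  have hR := (overEvaluationAdj hT G).fullyFaithfulROfIsIsoCounit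
  have := hR.full
  have := hR.faithful
  have hX' := hX.isPullback_evaluationAdjConst_unit hT
  exact (overEvaluationAdj hT G).isIso_unit_app_of_iso (X := Over.mk (X.hom.app T))
    (Over.isoMk hX'.isoPullback hX'.isoPullback_hom_snd)

end

/-- The category of `M'`-subobjects of a functor `G : A ⥤ D` (cartesian natural
transformations into `G` whose component at the terminal object is in `M`) is equivalent
to the `M`-slice category `M/(G ⊤)`. -/
theorem stmt6 {A : Type u'} [Category.{v'} A] [HasTerminal A]
    {D : Type u} [Category.{v} D] [HasPullbacks D]
    (E M : MorphismProperty D) (h : IsOFS E M)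
    (G : A ⥤ D) :
    Nonempty (CartMSub M G ≌ MSlice M (G.obj (⊤_ A))) := by
  have := h.respectsIso
  have hcounit := isIso_overEvaluationAdj_counit_app terminalIsTerminal G
  refine ⟨(overEvaluationAdj terminalIsTerminal G).restrictEquivalence (fun _ hX => hX.2)
    (fun Y hY => ⟨isCartesianNT_pullback_snd_const_map _ _, ?_⟩)
    (fun _ hX => isIso_overEvaluationAdj_unit_app _ _ hX.1) (fun Y _ => hcounit Y)⟩
  have := hcounit Y
  -- the ascription builds the iso in `Over` before `comma_iso_iff` reads it as a `Comma` iso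
  exact (M.comma_iso_iff (asIso ((overEvaluationAdj terminalIsTerminal G).counit.app Y) :)).2 hY
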